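/- Let S_λ be a weighted shift on a directed tree T with weights λ = {λ_v}_{v∈V°} such that the linear span of {e_u : u ∈ V} is contained in D^∞(S_λ), and let u ∈ V have at least one child. Suppose for every v ∈ Chi(u) the sequence {‖S_λ^n e_v‖²}_{n=0}^∞ is a Stieltjes moment sequence with a representing measure μ_v. If {‖S_λ^n e_u‖²}_{n=0}^∞ is a Stieltjes moment sequence and {‖S_λ^{n+1} e_u‖²}_{n=0}^∞ is determinate, then ∑_{v∈Chi(u)} |λ_v|² ∫_{[0,∞)} (1/s) dμ_v(s) ≤ 1, the Stieltjes moment sequence {‖S_λ^n e_u‖²}_{n=0}^∞ is determinate, and its unique representing measure μ_u is given by μ_u(σ) = ∑_{v∈Chi(u)} |λ_v|² ∫_σ (1/s) dμ_v(s) + ε_u δ₀(σ) with ε_u = 1 − ∑_{v∈Chi(u)} |λ_v|² ∫_{[0,∞)} (1/s) dμ_v(s). -/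

import Mathlib

open MeasureTheory ENNReal
open scoped NNReal
noncomputable section

/-- `μ` is a representing measure of the sequence `t`. -/
def IsRepMeasure (μ : Measure ℝ≥0) (t : ℕ → ℝ) : Prop :=
  ∀ n : ℕ, Integrable (fun s : ℝ≥0 => (s : ℝ) ^ n) μ ∧ t n = ∫ s, (s : ℝ) ^ n ∂μ

/-- `t` is a Stieltjes moment sequence. -/
def IsStieltjesMoment (t : ℕ → ℝ) : Prop := ∃ μ : Measure ℝ≥0, IsRepMeasure μ t

/-- `t` is a determinate Stieltjes moment sequence. -/
def IsDetStieltjesMoment (t : ℕ → ℝ) : Prop := ∃! μ : Measure ℝ≥0, IsRepMeasure μ t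

section Operators

universe u
variable {H : Type u} [NormedAddCommGroup H] [InnerProductSpace ℂ H]

/-- The maximal domain of the composition `S ∘ T`. -/
def compDomain (S T : H →ₗ.[ℂ] H) : Submodule ℂ H where
  carrier := {x | ∃ hx : x ∈ T.domain, T ⟨x, hx⟩ ∈ S.domain}
  zero_mem' := ⟨T.domain.zero_mem, by
    have h0 : (⟨0, T.domain.zero_mem⟩ : T.domain) = 0 := rfl
    rw [h0, LinearPMap.map_zero]; exact S.domain.zero_mem⟩
  add_mem' := by
    rintro x y ⟨hx, hx'⟩ ⟨hy, hy'⟩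
    refine ⟨T.domain.add_mem hx hy, ?_⟩
    have : (⟨x + y, T.domain.add_mem hx hy⟩ : T.domain) = ⟨x, hx⟩ + ⟨y, hy⟩ := rfl
    rw [this, LinearPMap.map_add]
    exact S.domain.add_mem hx' hy'
  smul_mem' := by
    rintro c x ⟨hx, hx'⟩
    refine ⟨T.domain.smul_mem c hx, ?_⟩
    have : (⟨c • x, T.domain.smul_mem c hx⟩ : T.domain) = c • (⟨x, hx⟩ : T.domain) := rfl
    rw [this, LinearPMap.map_smul]
    exact S.domain.smul_mem c hx'

/-- Composition `S ∘ T` of partial operators, on the maximal domain. -/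
def pmapComp (S T : H →ₗ.[ℂ] H) : H →ₗ.[ℂ] H :=
  S.comp (T.domRestrict (compDomain S T)) (by
    rintro ⟨x, hx⟩
    have hxT : x ∈ T.domain := (Submodule.mem_inf.mp hx).2
    have hxD : x ∈ compDomain S T := (Submodule.mem_inf.mp hx).1
    first
      | exact hxD.choose_spec
      | (rw [LinearPMap.domRestrict_apply (x' := ⟨x, hxT⟩) rfl]; exact hxD.choose_spec))

/-- Powers of a partial operator: `pmapPow S n = Sⁿ` with its natural domain. -/
def pmapPow (S : H →ₗ.[ℂ] H) : ℕ → (H →ₗ.[ℂ] H)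
  | 0 => LinearMap.id.toPMap ⊤
  | n + 1 => pmapComp (pmapPow S n) S

open Classical in
/-- Total (junk-valued) application of the power `Sⁿ`. -/
def powApp (S : H →ₗ.[ℂ] H) (n : ℕ) (x : H) : H :=
  if h : x ∈ (pmapPow S n).domain then (pmapPow S n) ⟨x, h⟩ else 0

/-- The set of `C^∞`-vectors of `S`. -/
def Dinf (S : H →ₗ.[ℂ] H) : Set H := {x | ∀ n : ℕ, x ∈ (pmapPow S n).domain}

/-- `F` is a core of `S`. -/
def IsCore (S : H →ₗ.[ℂ] H) (F : Submodule ℂ H) : Prop :=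
  F ≤ S.domain ∧ (S.graph : Set (H × H)) ⊆ closure ((S.domRestrict F).graph : Set (H × H))

end Operators
section Operators
universe u
variable {H : Type u} [NormedAddCommGroup H] [InnerProductSpace ℂ H]

/-- A normal (unbounded) operator: closed, densely defined, with `D(N*) = D(N)` and
`‖N* x‖ = ‖N x‖` on the common domain. -/
def IsNormalOp [CompleteSpace H] (N : H →ₗ.[ℂ] H) : Prop :=
  Dense (N.domain : Set H) ∧ N.IsClosed ∧ N.adjoint.domain = N.domain ∧
    ∀ (x : H) (hx : x ∈ N.domain) (hx' : x ∈ N.adjoint.domain),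
      ‖N.adjoint ⟨x, hx'⟩‖ = ‖N ⟨x, hx⟩‖

/-- A subnormal operator: densely defined with a normal extension in a possibly
larger Hilbert space. -/
def IsSubnormal {H : Type u} [NormedAddCommGroup H] [InnerProductSpace ℂ H]
    (S : H →ₗ.[ℂ] H) : Prop :=
  Dense (S.domain : Set H) ∧
  ∃ (K : Type u) (_ : NormedAddCommGroup K) (_ : InnerProductSpace ℂ K) (_ : CompleteSpace K)
    (J : H →ₗᵢ[ℂ] K) (N : K →ₗ.[ℂ] K), IsNormalOp N ∧
      ∀ x : S.domain, ∃ hx : J x ∈ N.domain, N ⟨J x, hx⟩ = J (S x)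

/-- A hyponormal operator. -/
def IsHyponormal [CompleteSpace H] (S : H →ₗ.[ℂ] H) : Prop :=
  Dense (S.domain : Set H) ∧
  ∀ (x : H) (hx : x ∈ S.domain), ∃ hx' : x ∈ S.adjoint.domain,
      ‖S.adjoint ⟨x, hx'⟩‖ ≤ ‖S ⟨x, hx⟩‖

end Operators

/-- A directed tree on the vertex set `V`: a connected directed graph without circuits
in which every non-root vertex has a unique parent. -/
structure DirectedTree (V : Type*) where
  edge : V → V → Prop
  connected : ∀ u v : V, Relation.ReflTransGen (fun a b => edge a b ∨ edge b a) u v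
  no_circuits : ∀ v : V, ¬ Relation.TransGen edge v v
  parent_unique : ∀ u v w : V, edge v u → edge w u → v = w

namespace DirectedTree

variable {V : Type*}

/-- The roots: vertices with no incoming edge. -/
def isRoot (T : DirectedTree V) (v : V) : Prop := ¬ ∃ u : V, T.edge u v

/-- `V°`: the non-root vertices, i.e. vertices having a parent. -/
def nonRoot (T : DirectedTree V) (v : V) : Prop := ∃ u : V, T.edge u v

open Classical in
/-- The parent function (with junk value at roots). -/
def par (T : DirectedTree V) (v : V) : V := if h : ∃ u : V, T.edge u v then h.choose else v

/-- The set of children of a vertex. -/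
def chi (T : DirectedTree V) (u : V) : Set V := {v | T.edge u v}

/-- Iterated children `Chi^n(u)`. -/
def chiN (T : DirectedTree V) : ℕ → V → Set V
  | 0, u => {u}
  | n + 1, u => ⋃ w ∈ T.chiN n u, T.chi w

/-- The descendants of `u`. -/
def des (T : DirectedTree V) (u : V) : Set V := ⋃ n : ℕ, T.chiN n u

/-- `T` is leafless: every vertex has a child. -/
def Leafless (T : DirectedTree V) : Prop := ∀ u : V, ∃ v : V, T.edge u v

/-- The product `λ_{u∣v} = ∏_{j=0}^{n-1} λ_{par^j(v)}` of the weights along the path of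
length `n` ending at `v` (for `v ∈ Chi^n(u)` this is the usual `λ_{u∣v}`). -/
def pathProd (T : DirectedTree V) (lam : V → ℂ) (n : ℕ) (v : V) : ℂ :=
  ∏ j ∈ Finset.range n, lam (T.par^[j] v)

open Classical in
/-- The formal weighted-shift transformation `Λ_T` on families of complex numbers. -/
def lamMap (T : DirectedTree V) (lam : V → ℂ) (f : V → ℂ) : V → ℂ :=
  fun v => if T.nonRoot v then lam v * f (T.par v) else 0

variable (T : DirectedTree V)

theorem lamMap_add (lam : V → ℂ) (f g : V → ℂ) :
    T.lamMap lam (f + g) = T.lamMap lam f + T.lamMap lam g := by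
  funext v; simp only [lamMap, Pi.add_apply]; split <;> ring

theorem lamMap_smul (lam : V → ℂ) (c : ℂ) (f : V → ℂ) :
    T.lamMap lam (c • f) = c • T.lamMap lam f := by
  funext v; simp only [lamMap, Pi.smul_apply, smul_eq_mul]; split <;> ring

theorem lamMap_zero (lam : V → ℂ) : T.lamMap lam (0 : V → ℂ) = 0 := by
  funext v; simp [lamMap]

/-- The domain of the weighted shift `S_λ`. -/
def shiftDomain (lam : V → ℂ) : Submodule ℂ (lp (fun _ : V => ℂ) 2) where
  carrier := {f | Memℓp (T.lamMap lam f) 2}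
  zero_mem' := by
    rw [Set.mem_setOf_eq, lp.coeFn_zero, lamMap_zero]
    exact zero_memℓp
  add_mem' := by
    intro f g hf hg
    rw [Set.mem_setOf_eq, lp.coeFn_add, lamMap_add]
    exact hf.add hg
  smul_mem' := by
    intro c f hf
    rw [Set.mem_setOf_eq, lp.coeFn_smul, lamMap_smul]
    exact hf.const_smul c

/-- The weighted shift `S_λ` on the directed tree `T`, as a partial operator in `ℓ²(V)`. -/
def shift (lam : V → ℂ) : lp (fun _ : V => ℂ) 2 →ₗ.[ℂ] lp (fun _ : V => ℂ) 2 where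
  domain := T.shiftDomain lam
  toFun :=
    { toFun := fun f => (⟨T.lamMap lam f, f.2⟩ : lp (fun _ : V => ℂ) 2)
      map_add' := by
        rintro f g
        apply lp.ext
        rw [lp.coeFn_add]
        show T.lamMap lam
            ((((f : lp (fun _ : V => ℂ) 2) : V → ℂ)) + (((g : lp (fun _ : V => ℂ) 2) : V → ℂ)))
          = T.lamMap lam ((f : lp (fun _ : V => ℂ) 2) : V → ℂ)
            + T.lamMap lam ((g : lp (fun _ : V => ℂ) 2) : V → ℂ)
        exact T.lamMap_add lam _ _
      map_smul' := by
        rintro c f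
        apply lp.ext
        rw [lp.coeFn_smul]
        show T.lamMap lam (c • (((f : lp (fun _ : V => ℂ) 2) : V → ℂ)))
          = c • T.lamMap lam ((f : lp (fun _ : V => ℂ) 2) : V → ℂ)
        exact T.lamMap_smul lam c _ }

end DirectedTree

open Classical in
/-- The basis vector `e_u` of `ℓ²(V)`. -/
def eVec {V : Type*} (u : V) : lp (fun _ : V => ℂ) 2 := lp.single 2 u 1

section MoreDefs
universe u
variable {H : Type u} [NormedAddCommGroup H] [InnerProductSpace ℂ H]

/-- The inner product, linear in the FIRST argument (the paper's convention). -/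
def innerPaper (x y : H) : ℂ := inner ℂ y x

/-- The moment sequence `n ↦ ‖Sⁿ f‖²` generated by the vector `f`. -/
def momentSeq (S : H →ₗ.[ℂ] H) (f : H) : ℕ → ℝ := fun n => ‖powApp S n f‖ ^ 2

/-- `f` is a quasi-analytic vector of `S` : `f ∈ D^∞(S)` and
`∑ₙ ‖Sⁿ f‖^{-1/n} = ∞` (with `1/0 = ∞`). -/
def IsQuasiAnalyticVec (S : H →ₗ.[ℂ] H) (f : H) : Prop :=
  (∀ n : ℕ, f ∈ (pmapPow S n).domain) ∧
  ∑' n : ℕ, ((‖powApp S (n + 1) f‖₊ ^ ((1 : ℝ) / (n + 1)) : ℝ≥0) : ℝ≥0∞)⁻¹ = ∞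

end MoreDefs

/-- The consistency condition `μ_u(σ) = ∑_{v ∈ Chi(u)} |λ_v|² ∫_σ (1/s) dμ_v(s) + ε_u δ₀(σ)`
at the vertex `u` (with the convention `1/0 = ∞`). -/
def consistentAt {V : Type*} (T : DirectedTree V) (lam : V → ℂ) (μ : V → MeasureTheory.Measure ℝ≥0)
    (ε : V → ℝ≥0) (u : V) : Prop :=
  ∀ σ : Set ℝ≥0, MeasurableSet σ →
    μ u σ = (∑' v : {v : V // T.edge u v},
        (‖lam (v : V)‖₊ : ℝ≥0∞) ^ 2 * ∫⁻ s in σ, ((s : ℝ≥0∞))⁻¹ ∂(μ (v : V)))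
      + (ε u : ℝ≥0∞) * MeasureTheory.Measure.dirac (0 : ℝ≥0) σ

/-- The sequence `{ϑ, t₀, t₁, t₂, …}` obtained by prepending `ϑ` to `t`. -/
def shiftedSeq (ϑ : ℝ) (t : ℕ → ℝ) : ℕ → ℝ := fun n => match n with
  | 0 => ϑ
  | n + 1 => t n

/-- A positive definite sequence of real numbers. -/
def IsPosDefSeq (t : ℕ → ℝ) : Prop :=
  ∀ (n : ℕ) (α : ℕ → ℂ),
    0 ≤ (∑ k ∈ Finset.range (n + 1), ∑ l ∈ Finset.range (n + 1),
        (t (k + l) : ℂ) * α k * (starRingEnd ℂ) (α l)).re ∧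
    (∑ k ∈ Finset.range (n + 1), ∑ l ∈ Finset.range (n + 1),
        (t (k + l) : ℂ) * α k * (starRingEnd ℂ) (α l)).im = 0

/-!
`S_λ e_u = ∑_{v ∈ Chi(u)} λ_v e_v`, and the vectors `Sⁿ e_v` for distinct children `v` have
disjoint supports, so `‖S^{n+1} e_u‖² = ∑_v |λ_v|² ‖Sⁿ e_v‖²`: the measure `ρ = ∑_v |λ_v|² μ_v`
represents the shifted sequence. If `μ` represents `‖Sⁿ e_u‖²`, then `s dμ(s)` represents the
shifted sequence as well, so determinacy forces `s dμ(s) = dρ(s)`. Hence `μ` is `s⁻¹ dρ(s)` away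
from `0`, and since its total mass is `‖e_u‖² = 1`, its atom at `0` is `1 - ∫ s⁻¹ dρ(s)`.
-/

section PartialOperatorPowers

variable {H : Type*} [NormedAddCommGroup H] [InnerProductSpace ℂ H] {S : H →ₗ.[ℂ] H}

theorem powApp_zero (x : H) : powApp S 0 x = x := by
  rw [powApp, dif_pos (show x ∈ (pmapPow S 0).domain from Submodule.mem_top)]
  rfl

theorem exists_mem_domain_of_mem_pmapPow_succ {x : H} {n : ℕ}
    (h : x ∈ (pmapPow S (n + 1)).domain) :
    ∃ hx : x ∈ S.domain, S ⟨x, hx⟩ ∈ (pmapPow S n).domain :=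
  (Submodule.mem_inf.mp h).1

theorem powApp_succ {x : H} {n : ℕ} (h : x ∈ (pmapPow S (n + 1)).domain) (hx : x ∈ S.domain) :
    powApp S (n + 1) x = powApp S n (S ⟨x, hx⟩) := by
  obtain ⟨_, hSx⟩ := exists_mem_domain_of_mem_pmapPow_succ h
  rw [powApp, dif_pos h, powApp, dif_pos hSx]
  rfl

theorem mem_domain_and_apply_mem_dinf {x : H} (hx : x ∈ Dinf S) :
    ∃ hx₁ : x ∈ S.domain, S ⟨x, hx₁⟩ ∈ Dinf S := by
  obtain ⟨hx₁, -⟩ := exists_mem_domain_of_mem_pmapPow_succ (hx 1)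
  exact ⟨hx₁, fun m => (exists_mem_domain_of_mem_pmapPow_succ (hx (m + 1))).2⟩

end PartialOperatorPowers

theorem lp.ofReal_norm_sq_eq_tsum {V : Type*} {E : V → Type*} [∀ v, NormedAddCommGroup (E v)]
    (g : lp E 2) : ENNReal.ofReal (‖g‖ ^ 2) = ∑' v, (‖g v‖₊ : ℝ≥0∞) ^ 2 := by
  have hs : HasSum (fun v => ‖g v‖ ^ 2) (‖g‖ ^ 2) := by
    simpa using lp.hasSum_norm (by norm_num : (0 : ℝ) < (2 : ℝ≥0∞).toReal) g
  rw [← hs.tsum_eq, ENNReal.ofReal_tsum_of_nonneg (fun v => by positivity) hs.summable]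
  simp only [ENNReal.ofReal_pow (norm_nonneg _), ofReal_norm, enorm_eq_nnnorm]

section StieltjesMoments

variable {μ ρ : Measure ℝ≥0} {t : ℕ → ℝ}

theorem IsRepMeasure.nonneg (h : IsRepMeasure μ t) (n : ℕ) : 0 ≤ t n :=
  (h n).2 ▸ integral_nonneg fun s => pow_nonneg s.coe_nonneg n

theorem IsRepMeasure.lintegral_pow (h : IsRepMeasure μ t) (n : ℕ) :
    ∫⁻ s, (s : ℝ≥0∞) ^ n ∂μ = ENNReal.ofReal (t n) := by
  rw [(h n).2, ofReal_integral_eq_lintegral_ofReal (h n).1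
    (Filter.Eventually.of_forall fun s => pow_nonneg s.coe_nonneg n)]
  simp only [ENNReal.ofReal_pow (NNReal.coe_nonneg _), ENNReal.ofReal_coe_nnreal]

theorem isRepMeasure_of_lintegral_pow (hnn : ∀ n, 0 ≤ t n)
    (h : ∀ n, ∫⁻ s, (s : ℝ≥0∞) ^ n ∂μ = ENNReal.ofReal (t n)) : IsRepMeasure μ t := by
  intro n
  have henorm : ∀ s : ℝ≥0, ‖(s : ℝ) ^ n‖ₑ = (s : ℝ≥0∞) ^ n := fun s => by
    rw [← ofReal_norm, Real.norm_of_nonneg (by positivity), ENNReal.ofReal_pow s.coe_nonneg,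
      ENNReal.ofReal_coe_nnreal]
  have hint : Integrable (fun s : ℝ≥0 => (s : ℝ) ^ n) μ :=
    ⟨(NNReal.continuous_coe.pow n).aestronglyMeasurable, by
      simp only [HasFiniteIntegral, henorm, h n, ENNReal.ofReal_lt_top]⟩
  refine ⟨hint, ?_⟩
  rw [integral_eq_lintegral_of_nonneg_ae (Filter.Eventually.of_forall fun s => by positivity)
    hint.aestronglyMeasurable]
  simp only [ENNReal.ofReal_pow (NNReal.coe_nonneg _), ENNReal.ofReal_coe_nnreal, h n,
    ENNReal.toReal_ofReal (hnn n)]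

theorem IsRepMeasure.withDensity_coe (h : IsRepMeasure μ t) :
    IsRepMeasure (μ.withDensity fun s => (s : ℝ≥0∞)) fun n => t (n + 1) := by
  refine isRepMeasure_of_lintegral_pow (fun n => h.nonneg (n + 1)) fun n => ?_
  rw [lintegral_withDensity_eq_lintegral_mul _ measurable_coe_nnreal_ennreal
    (measurable_coe_nnreal_ennreal.pow_const n), ← h.lintegral_pow (n + 1)]
  simp only [Pi.mul_apply, pow_succ']

theorem withDensity_coe_withDensity_inv :
    (μ.withDensity fun s => (s : ℝ≥0∞)).withDensity (fun s => (s : ℝ≥0∞)⁻¹)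
      = μ.restrict {0}ᶜ := by
  rw [← withDensity_mul μ (f := fun s => (s : ℝ≥0∞)) (g := fun s => (s : ℝ≥0∞)⁻¹)
    measurable_coe_nnreal_ennreal measurable_coe_nnreal_ennreal.inv,
    ← withDensity_one (μ := μ.restrict {0}ᶜ),
    ← withDensity_indicator (measurableSet_singleton 0).compl]
  refine congrArg _ (funext fun s => ?_)
  by_cases hs : s = 0
  · simp [hs]
  · simp [hs, ENNReal.mul_inv_cancel]

theorem IsRepMeasure.eq_of_isDetStieltjesMoment_shift (hμ : IsRepMeasure μ t) (ht0 : t 0 = 1)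
    (hρ : IsRepMeasure ρ fun n => t (n + 1)) (hdet : IsDetStieltjesMoment fun n => t (n + 1)) :
    μ = ρ.withDensity (fun s => (s : ℝ≥0∞)⁻¹)
      + (1 - ∫⁻ s, (s : ℝ≥0∞)⁻¹ ∂ρ) • Measure.dirac 0 := by
  obtain rfl : ρ = μ.withDensity fun s => (s : ℝ≥0∞) := hdet.unique hρ hμ.withDensity_coe
  have huniv : μ Set.univ = 1 := by simpa [ht0] using hμ.lintegral_pow 0
  have : IsFiniteMeasure μ := ⟨by simp [huniv]⟩
  have hI : ∫⁻ s, (s : ℝ≥0∞)⁻¹ ∂(μ.withDensity fun s => (s : ℝ≥0∞)) = μ {0}ᶜ := by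
    rw [← setLIntegral_univ, ← withDensity_apply _ MeasurableSet.univ,
      withDensity_coe_withDensity_inv, Measure.restrict_apply_univ]
  have hzero : μ {0} = 1 - μ {0}ᶜ := by
    rw [← huniv, ← measure_compl (measurableSet_singleton 0).compl (measure_ne_top _ _),
      compl_compl]
  rw [withDensity_coe_withDensity_inv, hI, ← hzero, ← Measure.restrict_singleton,
    Measure.restrict_compl_add_restrict (measurableSet_singleton 0)]

theorem IsStieltjesMoment.isDetStieltjesMoment_of_shift (ht : IsStieltjesMoment t)
    (ht0 : t 0 = 1) (hρ : IsRepMeasure ρ fun n => t (n + 1))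
    (hdet : IsDetStieltjesMoment fun n => t (n + 1)) :
    ∫⁻ s, (s : ℝ≥0∞)⁻¹ ∂ρ ≤ 1 ∧ IsDetStieltjesMoment t ∧
      IsRepMeasure (ρ.withDensity (fun s => (s : ℝ≥0∞)⁻¹)
        + (1 - ∫⁻ s, (s : ℝ≥0∞)⁻¹ ∂ρ) • Measure.dirac 0) t := by
  obtain ⟨μ, hμ⟩ := ht
  have hμ_eq := hμ.eq_of_isDetStieltjesMoment_shift ht0 hρ hdet
  refine ⟨?_, ⟨_, hμ_eq ▸ hμ, fun ν hν => hν.eq_of_isDetStieltjesMoment_shift ht0 hρ hdet⟩,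
    hμ_eq ▸ hμ⟩
  calc ∫⁻ s, (s : ℝ≥0∞)⁻¹ ∂ρ = ρ.withDensity (fun s => (s : ℝ≥0∞)⁻¹) Set.univ := by
        rw [withDensity_apply _ MeasurableSet.univ, setLIntegral_univ]
    _ ≤ μ Set.univ := by
        rw [hμ_eq, Measure.add_apply]
        exact le_self_add
    _ = 1 := by simpa [ht0] using hμ.lintegral_pow 0

end StieltjesMoments

namespace DirectedTree

variable {V : Type*} (T : DirectedTree V) (lam : V → ℂ)

theorem edge_par {v : V} (h : T.nonRoot v) : T.edge (T.par v) v := by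
  have h' : ∃ u, T.edge u v := h
  rw [par, dif_pos h']
  exact h'.choose_spec

theorem par_eq_of_edge {u v : V} (h : T.edge u v) : T.par v = u :=
  T.parent_unique v _ u (T.edge_par ⟨u, h⟩) h

open Classical in
theorem lamMap_eVec_apply (u w : V) :
    T.lamMap lam (eVec u) w = if T.edge u w then lam w else 0 := by
  by_cases huw : T.edge u w
  · simp [lamMap, eVec, huw, T.par_eq_of_edge huw, show T.nonRoot w from ⟨u, huw⟩]
  · have : T.nonRoot w → T.par w ≠ u := fun hw hpar => huw (hpar ▸ T.edge_par hw)
    by_cases hw : T.nonRoot w <;> simp [lamMap, eVec, huw, hw, this]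

theorem lamMap_iterate_apply (f : V → ℂ) (n : ℕ) (w : V) :
    (T.lamMap lam)^[n] f w = (T.lamMap lam)^[n] 1 w * f (T.par^[n] w) := by
  induction n generalizing w with
  | zero => simp
  | succ n ih =>
    simp only [Function.iterate_succ_apply', lamMap, ih]
    split_ifs
    · rw [← Function.iterate_succ_apply T.par, Function.iterate_succ_apply', mul_assoc]
    · ring

theorem powApp_shift {f : lp (fun _ : V => ℂ) 2} (hf : f ∈ Dinf (T.shift lam)) (n : ℕ) :
    ⇑(powApp (T.shift lam) n f) = (T.lamMap lam)^[n] f := by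
  induction n generalizing f with
  | zero => rw [powApp_zero]; rfl
  | succ n ih =>
    obtain ⟨hf₁, hSf⟩ := mem_domain_and_apply_mem_dinf hf
    rw [powApp_succ (hf (n + 1)) hf₁, ih hSf, Function.iterate_succ_apply]
    rfl

theorem ofReal_momentSeq {f : lp (fun _ : V => ℂ) 2} (hf : f ∈ Dinf (T.shift lam)) (n : ℕ) :
    ENNReal.ofReal (momentSeq (T.shift lam) f n)
      = ∑' w, (‖(T.lamMap lam)^[n] f w‖₊ : ℝ≥0∞) ^ 2 := by
  rw [momentSeq, lp.ofReal_norm_sq_eq_tsum, T.powApp_shift lam hf]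

open Classical in
theorem eVec_apply (u w : V) : (eVec u : lp (fun _ : V => ℂ) 2) w = if w = u then 1 else 0 := by
  simp [eVec, lp.single_apply, Pi.single_apply]

theorem tsum_lamMap_iterate_succ_eVec (u : V) (n : ℕ) :
    ∑' w, (‖(T.lamMap lam)^[n + 1] (eVec u) w‖₊ : ℝ≥0∞) ^ 2
      = ∑' v : {v : V // T.edge u v}, (‖lam v‖₊ : ℝ≥0∞) ^ 2
          * ∑' w, (‖(T.lamMap lam)^[n] (eVec (v : V)) w‖₊ : ℝ≥0∞) ^ 2 := by
  classical
  simp_rw [← ENNReal.tsum_mul_left]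
  rw [ENNReal.tsum_comm]
  refine tsum_congr fun w => ?_
  simp only [Function.iterate_succ_apply, T.lamMap_iterate_apply lam (T.lamMap lam (eVec u)) n w,
    fun v : V => T.lamMap_iterate_apply lam (eVec v) n w, lamMap_eVec_apply, eVec_apply]
  by_cases hx : T.edge u (T.par^[n] w)
  · rw [tsum_eq_single ⟨_, hx⟩ fun v hv => ?_]
    · simp [hx, mul_pow, mul_comm]
    · have hne : T.par^[n] w ≠ v := fun h => hv (Subtype.ext h.symm)
      simp [hne]
  · rw [ENNReal.tsum_eq_zero.mpr fun v => ?_]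
    · simp [hx]
    · have hne : T.par^[n] w ≠ v := fun h => hx (h ▸ v.2)
      simp [hne]

theorem momentSeq_eVec_zero (u : V) : momentSeq (T.shift lam) (eVec u) 0 = 1 := by
  classical
  rw [momentSeq, powApp_zero, eVec, lp.norm_single (by norm_num), norm_one, one_pow]

theorem ofReal_momentSeq_eVec_succ (hdinf : ∀ v : V, eVec v ∈ Dinf (T.shift lam)) (u : V)
    (n : ℕ) :
    ENNReal.ofReal (momentSeq (T.shift lam) (eVec u) (n + 1))
      = ∑' v : {v : V // T.edge u v}, (‖lam v‖₊ : ℝ≥0∞) ^ 2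
          * ENNReal.ofReal (momentSeq (T.shift lam) (eVec (v : V)) n) := by
  simp only [T.ofReal_momentSeq lam (hdinf _), T.tsum_lamMap_iterate_succ_eVec]

theorem isRepMeasure_sum_children (hdinf : ∀ v : V, eVec v ∈ Dinf (T.shift lam)) (u : V)
    {μ : V → Measure ℝ≥0}
    (hrep : ∀ v : V, T.edge u v → IsRepMeasure (μ v) (momentSeq (T.shift lam) (eVec v))) :
    IsRepMeasure (Measure.sum fun v : {v : V // T.edge u v} => (‖lam v‖₊ : ℝ≥0∞) ^ 2 • μ v)
      fun n => momentSeq (T.shift lam) (eVec u) (n + 1) := by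
  refine isRepMeasure_of_lintegral_pow (fun n => sq_nonneg _) fun n => ?_
  simp only [lintegral_sum_measure, lintegral_smul_measure, smul_eq_mul,
    T.ofReal_momentSeq_eVec_succ lam hdinf, fun v : {v : V // T.edge u v} =>
      (hrep v v.2).lintegral_pow n]

end DirectedTree

theorem stmt9_general {V : Type*} (T : DirectedTree V) (lam : V → ℂ)
    (hdom : (Submodule.span ℂ (Set.range (eVec (V := V))) : Set (lp (fun _ : V => ℂ) 2)) ⊆ Dinf (T.shift lam))
    (u : V)
    (μ : V → Measure ℝ≥0)
    (hrep : ∀ v : V, T.edge u v → IsRepMeasure (μ v) (momentSeq (T.shift lam) (eVec v)))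
    (h1 : IsStieltjesMoment (momentSeq (T.shift lam) (eVec u)))
    (hdet : IsDetStieltjesMoment (fun n => momentSeq (T.shift lam) (eVec u) (n + 1))) :
    (∑' v : {v : V // T.edge u v},
        (‖lam (v : V)‖₊ : ℝ≥0∞) ^ 2 * ∫⁻ s, ((s : ℝ≥0∞))⁻¹ ∂(μ (v : V))) ≤ 1
    ∧ IsDetStieltjesMoment (momentSeq (T.shift lam) (eVec u))
    ∧ IsRepMeasure
      (Measure.sum (fun v : {v : V // T.edge u v} =>
          ((‖lam (v : V)‖₊ : ℝ≥0∞) ^ 2) • ((μ (v : V)).withDensity fun s => ((s : ℝ≥0∞))⁻¹))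
        + (1 - ∑' v : {v : V // T.edge u v},
            (‖lam (v : V)‖₊ : ℝ≥0∞) ^ 2 * ∫⁻ s, ((s : ℝ≥0∞))⁻¹ ∂(μ (v : V)))
          • Measure.dirac (0 : ℝ≥0))
      (momentSeq (T.shift lam) (eVec u)) := by
  have hdinf : ∀ v : V, eVec v ∈ Dinf (T.shift lam) :=
    fun v => hdom (Submodule.subset_span ⟨v, rfl⟩)
  have hsum : ∑' v : {v : V // T.edge u v},
      (‖lam (v : V)‖₊ : ℝ≥0∞) ^ 2 * ∫⁻ s, ((s : ℝ≥0∞))⁻¹ ∂(μ (v : V))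
        = ∫⁻ s, (s : ℝ≥0∞)⁻¹ ∂(Measure.sum fun v : {v : V // T.edge u v} =>
            (‖lam v‖₊ : ℝ≥0∞) ^ 2 • μ v) := by
    simp only [lintegral_sum_measure, lintegral_smul_measure, smul_eq_mul]
  simp only [hsum, ← withDensity_smul_measure, ← withDensity_sum]
  exact h1.isDetStieltjesMoment_of_shift (T.momentSeq_eVec_zero lam u)
    (T.isRepMeasure_sum_children lam hdinf u hrep) hdet

/-- if `u` generates a Stieltjes moment sequence whose shift by one is
determinate, then the consistency condition holds at `u`, the moment sequence of `u` is
determinate and its unique representing measure is the explicitly given one. -/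
theorem stmt9 {V : Type*} (T : DirectedTree V) (lam : V → ℂ)
    (hdom : (Submodule.span ℂ (Set.range (eVec (V := V))) : Set (lp (fun _ : V => ℂ) 2)) ⊆ Dinf (T.shift lam))
    (u : V) (hu : ∃ v : V, T.edge u v)
    (μ : V → Measure ℝ≥0)
    (hrep : ∀ v : V, T.edge u v → IsRepMeasure (μ v) (momentSeq (T.shift lam) (eVec v)))
    (h1 : IsStieltjesMoment (momentSeq (T.shift lam) (eVec u)))
    (hdet : IsDetStieltjesMoment (fun n => momentSeq (T.shift lam) (eVec u) (n + 1))) :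
    (∑' v : {v : V // T.edge u v},
        (‖lam (v : V)‖₊ : ℝ≥0∞) ^ 2 * ∫⁻ s, ((s : ℝ≥0∞))⁻¹ ∂(μ (v : V))) ≤ 1
    ∧ IsDetStieltjesMoment (momentSeq (T.shift lam) (eVec u))
    ∧ IsRepMeasure
      (Measure.sum (fun v : {v : V // T.edge u v} =>
          ((‖lam (v : V)‖₊ : ℝ≥0∞) ^ 2) • ((μ (v : V)).withDensity fun s => ((s : ℝ≥0∞))⁻¹))
        + (1 - ∑' v : {v : V // T.edge u v},
            (‖lam (v : V)‖₊ : ℝ≥0∞) ^ 2 * ∫⁻ s, ((s : ℝ≥0∞))⁻¹ ∂(μ (v : V)))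
          • Measure.dirac (0 : ℝ≥0))
      (momentSeq (T.shift lam) (eVec u)) :=
  stmt9_general T lam hdom u μ hrep h1 hdet
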